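/- arXiv:1401.2278 — 3 statements merged into one kernel-verified Lean document; each statement's English description precedes it below -/
import Mathlib

section
/- Under the hierarchical model X | n ~ Binomial(K, q(n)), q(n) = ε/3 + (1-4ε/3)(n/N), n | θ ~ Binomial(N, θ), θ ~ (1-π₁)δ₀ + π₁·Uniform(0,a), the statistic m₂ := (X² - K²ε²/9 - K(ε/3)(1-ε/3) - K(1-2ε/3)μ₁ - K²(2ε/3)μ₁) / ((K²-K)(1-4ε/3)²), where μ₁ := E[X/K - ε/3], satisfies E[m₂] = ((N-1)/N)·π₁·(a²/3) + (1/N)·π₁·(a/2). -/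
/-!
Conditionally on `θ`, the read count `X` is binomial with success probability `q(n)`, so
`E[X² | n] = K q + (K² - K) q²`, and `q(n)` is affine in the binomial variable `n`. The first
two factorial moments `E[n] = Nθ`, `E[n(n-1)] = N(N-1)θ²` make `E[X² | θ]` a quadratic
polynomial in `θ`. The error-rate corrections in the numerator of `m₂` cancel every term that
does not carry the factor `K² - K`, and dividing by `(K² - K)(1 - 4ε/3)²` leaves
`E[m₂ | θ] = r (θ - E θ) + θ² + θ(1 - θ)/N` for some constant `r`. Averaging over the mixture
prior only needs `E θ = π₁ a / 2` and `E θ² = π₁ a² / 3`.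
-/

open Finset MeasureTheory Polynomial

section BinomialMoments

variable {R : Type*} [CommRing R] (N : ℕ) (θ : R)

theorem sum_choose_mul_pow_mul_pow_eq_one :
    ∑ n ∈ range (N + 1), (N.choose n : R) * θ ^ n * (1 - θ) ^ (N - n) = 1 := by
  simpa [eval_finsetSum, bernsteinPolynomial] using congrArg (eval θ) (bernsteinPolynomial.sum R N)

theorem sum_mul_choose_mul_pow_mul_pow :
    ∑ n ∈ range (N + 1), (n : R) * ((N.choose n : R) * θ ^ n * (1 - θ) ^ (N - n)) = N * θ := by
  simpa [eval_finsetSum, bernsteinPolynomial] using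
    congrArg (eval θ) (bernsteinPolynomial.sum_smul R N)

theorem sum_mul_sub_one_mul_choose_mul_pow_mul_pow :
    ∑ n ∈ range (N + 1), ((n : R) * (n - 1)) * ((N.choose n : R) * θ ^ n * (1 - θ) ^ (N - n))
      = N * (N - 1) * θ ^ 2 := by
  have cast_mul_pred : ∀ m : ℕ, ((m * (m - 1) : ℕ) : R) = m * (m - 1) := by
    rintro (_ | m) <;> simp
  simpa only [eval_finsetSum, nsmul_eq_mul, cast_mul_pred, bernsteinPolynomial, eval_mul,
    eval_pow, eval_X, eval_natCast, eval_sub, eval_one] using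
    congrArg (eval θ) (bernsteinPolynomial.sum_mul_smul R N)

theorem sum_choose_mul_pow_mul_pow_mul_quadratic (α β γ : R) :
    ∑ n ∈ range (N + 1),
        (N.choose n : R) * θ ^ n * (1 - θ) ^ (N - n) * (α + β * n + γ * (n * (n - 1)))
      = α + β * (N * θ) + γ * (N * (N - 1) * θ ^ 2) := by
  have expand : ∀ n ∈ range (N + 1),
      (N.choose n : R) * θ ^ n * (1 - θ) ^ (N - n) * (α + β * n + γ * (n * (n - 1)))
        = α * ((N.choose n : R) * θ ^ n * (1 - θ) ^ (N - n))
          + β * ((n : R) * ((N.choose n : R) * θ ^ n * (1 - θ) ^ (N - n)))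
          + γ * (((n : R) * (n - 1)) * ((N.choose n : R) * θ ^ n * (1 - θ) ^ (N - n))) :=
    fun n _ => by ring
  rw [sum_congr rfl expand, sum_add_distrib, sum_add_distrib, ← mul_sum, ← mul_sum, ← mul_sum,
    sum_choose_mul_pow_mul_pow_eq_one, sum_mul_choose_mul_pow_mul_pow,
    sum_mul_sub_one_mul_choose_mul_pow_mul_pow, mul_one]

end BinomialMoments

/-- The right side is `k E q + (k² - k) ((E q)² + Var q)` for `n ~ Binomial(N, θ)`. -/
theorem sum_choose_mul_pow_mul_pow_mul_binomial_second_moment {F : Type*} [Field F]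
    {N : ℕ} (hN : (N : F) ≠ 0) (θ k e c : F) {q : ℕ → F} (hq : ∀ n, q n = e + c * (n / N)) :
    ∑ n ∈ range (N + 1),
        (N.choose n : F) * θ ^ n * (1 - θ) ^ (N - n) * (k * q n * (1 - q n) + k ^ 2 * q n ^ 2)
      = k * (e + c * θ) + (k ^ 2 - k) * ((e + c * θ) ^ 2 + c ^ 2 * θ * (1 - θ) / N) := by
  have quadratic_in_n : ∀ n : ℕ, k * q n * (1 - q n) + k ^ 2 * q n ^ 2
      = (k * e + (k ^ 2 - k) * e ^ 2)
        + (k * c / N + (k ^ 2 - k) * (2 * e * c / N + c ^ 2 / N ^ 2)) * n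
        + ((k ^ 2 - k) * c ^ 2 / N ^ 2) * (n * (n - 1)) := by
    intro n
    rw [hq]
    ring
  simp only [quadratic_in_n, sum_choose_mul_pow_mul_pow_mul_quadratic]
  field_simp
  ring

theorem intervalIntegral_quadratic (a b p₀ p₁ p₂ : ℝ) :
    ∫ x in a..b, (p₀ + p₁ * x + p₂ * x ^ 2)
      = p₀ * (b - a) + p₁ * ((b ^ 2 - a ^ 2) / 2) + p₂ * ((b ^ 3 - a ^ 3) / 3) := by
  have integrable : ∀ f : ℝ → ℝ, Continuous f → IntervalIntegrable f volume a b :=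
    fun f hf => hf.intervalIntegrable a b
  rw [intervalIntegral.integral_add (integrable _ (by fun_prop)) (integrable _ (by fun_prop)),
    intervalIntegral.integral_add (integrable _ (by fun_prop)) (integrable _ (by fun_prop)),
    intervalIntegral.integral_const, intervalIntegral.integral_const_mul,
    intervalIntegral.integral_const_mul, integral_id, integral_pow, smul_eq_mul]
  ring

/-- The left side is `E f(θ)` for `θ ~ (1 - π) δ₀ + π Uniform(0, a)`. -/
theorem mixture_mean_of_quadratic {a : ℝ} (ha : a ≠ 0) (π p₀ p₁ p₂ : ℝ) {f : ℝ → ℝ}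
    (hf : ∀ θ, f θ = p₀ + p₁ * θ + p₂ * θ ^ 2) :
    (1 - π) * f 0 + π * ((1 / a) * ∫ θ in (0:ℝ)..a, f θ)
      = p₀ + p₁ * (π * (a / 2)) + p₂ * (π * (a ^ 2 / 3)) := by
  simp only [hf, intervalIntegral_quadratic]
  field_simp
  ring

theorem second_moment_statistic_general
    (N K : ℕ) (hN : 1 ≤ N) (hK : 2 ≤ K) (ε a π₁ : ℝ)
    (hε' : ε < 3 / 4) (ha : 0 < a)
    (q : ℕ → ℝ) (hq : ∀ n, q n = ε / 3 + (1 - 4 * ε / 3) * (n / N))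
    (h : ℝ → ℝ)
    (hh : ∀ θ, h θ = ∑ n ∈ Finset.range (N + 1),
        (N.choose n : ℝ) * θ ^ n * (1 - θ) ^ (N - n) *
          ((K : ℝ) * q n * (1 - q n) + (K : ℝ) ^ 2 * q n ^ 2))
    (μ₁ : ℝ) (hμ₁ : μ₁ = (1 - 4 * ε / 3) * π₁ * (a / 2))
    (m₂ : ℝ → ℝ)
    (hm₂ : ∀ θ, m₂ θ =
      (h θ - (K : ℝ) ^ 2 * ε ^ 2 / 9 - (K : ℝ) * (ε / 3) * (1 - ε / 3)
          - (K : ℝ) * (1 - 2 * ε / 3) * μ₁ - (K : ℝ) ^ 2 * (2 * ε / 3) * μ₁)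
        / (((K : ℝ) ^ 2 - K) * (1 - 4 * ε / 3) ^ 2)) :
    (1 - π₁) * m₂ 0 + π₁ * ((1 / a) * ∫ θ in (0:ℝ)..a, m₂ θ)
      = ((N : ℝ) - 1) / N * π₁ * (a ^ 2 / 3) + (1 / N) * π₁ * (a / 2) := by
  have hN0 : (N : ℝ) ≠ 0 := by positivity
  have hc : 1 - 4 * ε / 3 ≠ 0 := by linarith
  have hKK : (K : ℝ) ^ 2 - K ≠ 0 := by
    have : (2 : ℝ) ≤ K := by exact_mod_cast hK
    nlinarith
  obtain ⟨r, hr⟩ : ∃ r : ℝ,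
      r * (((K : ℝ) ^ 2 - K) * (1 - 4 * ε / 3)) = K + 2 * (ε / 3) * ((K : ℝ) ^ 2 - K) :=
    ⟨_, div_mul_cancel₀ _ (mul_ne_zero hKK hc)⟩
  have m₂_quadratic : ∀ θ, m₂ θ
      = -(r * (π₁ * (a / 2))) + (r + 1 / N) * θ + (1 - 1 / N) * θ ^ 2 := by
    intro θ
    rw [hm₂, hh, sum_choose_mul_pow_mul_pow_mul_binomial_second_moment hN0 θ _ _ _ hq, hμ₁,
      div_eq_iff (mul_ne_zero hKK (pow_ne_zero 2 hc))]
    linear_combination -(1 - 4 * ε / 3) * (θ - π₁ * (a / 2)) * hr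
  rw [mixture_mean_of_quadratic ha.ne' π₁ _ _ _ m₂_quadratic]
  field_simp
  ring

/-- Single-pool hierarchical model: `X | n ~ Binomial(K, q n)` with
`q n = ε/3 + (1-4ε/3)(n/N)`, `n | θ ~ Binomial(N, θ)`,
`θ ~ (1-π₁) δ₀ + π₁ Uniform(0,a)`.  With `μ₁ = E[X/K - ε/3] = (1-4ε/3)π₁a/2`,
the corrected second-moment statistic
`m₂ = (X² - K²ε²/9 - K(ε/3)(1-ε/3) - K(1-2ε/3)μ₁ - K²(2ε/3)μ₁)/((K²-K)(1-4ε/3)²)`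
satisfies `E[m₂] = ((N-1)/N) π₁ a²/3 + (1/N) π₁ (a/2)`.
Here `h θ = E[X² | θ]` is written via the binomial second moment
`E[X² | n] = K q (1-q) + K² q²` mixed over `n | θ`, and the outer expectation
mixes the point mass at `0` with the uniform part. -/
theorem second_moment_statistic
    (N K : ℕ) (hN : 1 ≤ N) (hK : 2 ≤ K) (ε a π₁ : ℝ)
    (hε : 0 ≤ ε) (hε' : ε < 3 / 4) (ha : 0 < a) (ha' : a < 1)
    (hπ : 0 < π₁) (hπ' : π₁ < 1)
    (q : ℕ → ℝ) (hq : ∀ n, q n = ε / 3 + (1 - 4 * ε / 3) * (n / N))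
    (h : ℝ → ℝ)
    (hh : ∀ θ, h θ = ∑ n ∈ Finset.range (N + 1),
        (N.choose n : ℝ) * θ ^ n * (1 - θ) ^ (N - n) *
          ((K : ℝ) * q n * (1 - q n) + (K : ℝ) ^ 2 * q n ^ 2))
    (μ₁ : ℝ) (hμ₁ : μ₁ = (1 - 4 * ε / 3) * π₁ * (a / 2))
    (m₂ : ℝ → ℝ)
    (hm₂ : ∀ θ, m₂ θ =
      (h θ - (K : ℝ) ^ 2 * ε ^ 2 / 9 - (K : ℝ) * (ε / 3) * (1 - ε / 3)
          - (K : ℝ) * (1 - 2 * ε / 3) * μ₁ - (K : ℝ) ^ 2 * (2 * ε / 3) * μ₁)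
        / (((K : ℝ) ^ 2 - K) * (1 - 4 * ε / 3) ^ 2)) :
    (1 - π₁) * m₂ 0 + π₁ * ((1 / a) * ∫ θ in (0:ℝ)..a, m₂ θ)
      = ((N : ℝ) - 1) / N * π₁ * (a ^ 2 / 3) + (1 / N) * π₁ * (a / 2) :=
  second_moment_statistic_general N K hN hK ε a π₁ hε' ha q hq h hh μ₁ hμ₁ m₂ hm₂
end

section
/- For the thresholding rule δᵢ(t) = 1{fdrᵢ(X) < t} where fdrᵢ(X) = P(μᵢ = 0 | X), the Bayesian false discovery rate BFDR(t) = E[Σᵢ 1{fdrᵢ(X)<t}·fdrᵢ(X) / max(Σᵢ 1{fdrᵢ(X)<t}, 1)] is a nondecreasing function of t ∈ (0, ∞). -/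
/-!
Pointwise in `x`, raising the threshold from `t` to `t'` only adds hypotheses whose `fdr` is at
least `t`, while all those already rejected have `fdr` below `t`. Appending values that are at
least as large as every old value cannot decrease an average, so the integrand is monotone in
the threshold; it lies in `[0, 1]`, hence is integrable, and the inequality integrates.
-/

open MeasureTheory ProbabilityTheory Finset

section ThresholdMean

variable {ι : Type*}

theorem sum_div_card_le_sum_div_card_of_subset [DecidableEq ι] {A B : Finset ι} {f : ι → ℝ}
    {t : ℝ} (hAB : A ⊆ B) (hA : A.Nonempty) (hlow : ∀ i ∈ A, f i ≤ t)
    (hhigh : ∀ i ∈ B \ A, t ≤ f i) :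
    (∑ i ∈ A, f i) / #A ≤ (∑ i ∈ B, f i) / #B := by
  have hm : (0 : ℝ) < #A := by exact_mod_cast hA.card_pos
  have hsum : ∑ i ∈ B, f i = ∑ i ∈ A, f i + ∑ i ∈ B \ A, f i := by
    rw [← sum_sdiff hAB, add_comm]
  have hcard : (#B : ℝ) = #A + #(B \ A) := by
    rw [← card_sdiff_add_card_eq_card hAB, Nat.cast_add, add_comm]
  have hS : ∑ i ∈ A, f i ≤ #A * t := by simpa using sum_le_sum hlow
  have hT : #(B \ A) * t ≤ ∑ i ∈ B \ A, f i := by simpa using sum_le_sum hhigh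
  rw [hsum, hcard, div_le_div_iff₀ hm (by positivity)]
  -- left: `(∑ A) * #(B \ A) ≤ #A * (∑ B \ A)`; both sides compare with `#A * #(B \ A) * t`
  linarith [mul_le_mul_of_nonneg_right hS (Nat.cast_nonneg (α := ℝ) #(B \ A)),
    mul_le_mul_of_nonneg_left hT hm.le]

-- `max _ 1` makes the mean of no values `0`, as `R ∨ 1` does in the BFDR.
noncomputable def thresholdMean (s : Finset ι) (f : ι → ℝ) (t : ℝ) : ℝ :=
  (∑ i ∈ s with f i < t, f i) / max (#{i ∈ s | f i < t} : ℝ) 1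

variable {s : Finset ι} {f : ι → ℝ}

theorem thresholdMean_nonneg (hf : ∀ i ∈ s, 0 ≤ f i) (t : ℝ) : 0 ≤ thresholdMean s f t :=
  div_nonneg (sum_nonneg fun i hi => hf i (mem_filter.1 hi).1)
    (zero_le_one.trans (le_max_right _ _))

theorem thresholdMean_le (hf : ∀ i ∈ s, f i ≤ 1) (t : ℝ) : thresholdMean s f t ≤ 1 := by
  rw [thresholdMean, div_le_one (zero_lt_one.trans_le (le_max_right _ _))]
  calc ∑ i ∈ s with f i < t, f i ≤ ∑ i ∈ s with f i < t, (1 : ℝ) :=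
        sum_le_sum fun i hi => hf i (mem_filter.1 hi).1
    _ ≤ _ := by simp

theorem thresholdMean_mono [DecidableEq ι] (hf : ∀ i ∈ s, 0 ≤ f i) :
    Monotone (thresholdMean s f) := by
  intro t t' htt'
  rcases {i ∈ s | f i < t}.eq_empty_or_nonempty with hA | hA
  · rw [thresholdMean, hA]
    simpa using thresholdMean_nonneg hf t'
  have hAB : {i ∈ s | f i < t} ⊆ {i ∈ s | f i < t'} :=
    monotone_filter_right s fun _ _ h => h.trans_le htt'
  have hmax (t : ℝ) (h : {i ∈ s | f i < t}.Nonempty) : max (#{i ∈ s | f i < t} : ℝ) 1 = #_ :=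
    max_eq_left (by exact_mod_cast h.card_pos)
  rw [thresholdMean, thresholdMean, hmax t hA, hmax t' (hA.mono hAB)]
  refine sum_div_card_le_sum_div_card_of_subset hAB hA (fun i hi => (mem_filter.1 hi).2.le) ?_
  intro i hi
  simp only [mem_sdiff, mem_filter, not_and, not_lt] at hi
  exact hi.2 hi.1.1

theorem thresholdMean_eq_sum_ite_div (s : Finset ι) (f : ι → ℝ) (t : ℝ) :
    thresholdMean s f t =
      (∑ i ∈ s, if f i < t then f i else 0) / max (∑ i ∈ s, if f i < t then (1 : ℝ) else 0) 1 := by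
  rw [thresholdMean, sum_filter, natCast_card_filter]

variable {Ω : Type*} [MeasurableSpace Ω] {g : ι → Ω → ℝ}

theorem measurable_thresholdMean (hg : ∀ i, Measurable (g i)) (s : Finset ι) (t : ℝ) :
    Measurable fun x => thresholdMean s (g · x) t := by
  have hlt (i : ι) : MeasurableSet {x | g i x < t} := measurableSet_lt (hg i) measurable_const
  simp_rw [thresholdMean_eq_sum_ite_div]
  exact (measurable_sum s fun i _ => (hg i).ite (hlt i) measurable_const).div
    ((measurable_sum s fun i _ => measurable_const.ite (hlt i) measurable_const).max
      measurable_const)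

theorem integrable_thresholdMean {μ : Measure Ω} [IsFiniteMeasure μ] (hg : ∀ i, Measurable (g i))
    (hg01 : ∀ i x, g i x ∈ Set.Icc (0 : ℝ) 1) (s : Finset ι) (t : ℝ) :
    Integrable (fun x => thresholdMean s (g · x) t) μ := by
  refine .of_bound (measurable_thresholdMean hg s t).aestronglyMeasurable 1
    (.of_forall fun x => ?_)
  rw [Real.norm_of_nonneg (thresholdMean_nonneg (fun i _ => (hg01 i x).1) t)]
  exact thresholdMean_le (fun i _ => (hg01 i x).2) t

end ThresholdMean

/-- Monotonicity of the Bayesian FDR of the thresholding rule.  With posterior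
null probabilities `fdrᵢ(X) ∈ [0,1]` and the rule `δᵢ(t) = 1{fdrᵢ(X) < t}`,
`BFDR(t) = E[Σᵢ 1{fdrᵢ<t} fdrᵢ / max(Σᵢ 1{fdrᵢ<t}, 1)]` is nondecreasing in
`t ∈ (0, ∞)`. -/
theorem BFDR_monotone
    {Ω : Type*} [MeasureSpace Ω] [IsProbabilityMeasure (ℙ : Measure Ω)]
    (p : ℕ) (fdr : Fin p → Ω → ℝ)
    (hmeas : ∀ i, Measurable (fdr i))
    (hfdr : ∀ i x, fdr i x ∈ Set.Icc (0:ℝ) 1)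
    (BFDR : ℝ → ℝ)
    (hBFDR : ∀ t, BFDR t = ∫ x,
      (∑ i, if fdr i x < t then fdr i x else 0)
        / max (∑ i, if fdr i x < t then (1:ℝ) else 0) 1 ∂(ℙ : Measure Ω)) :
    ∀ t t' : ℝ, 0 < t → t ≤ t' → BFDR t ≤ BFDR t' := by
  intro t t' _ htt'
  have hBFDR_eq (t : ℝ) : BFDR t = ∫ x, thresholdMean univ (fdr · x) t := by
    simp only [hBFDR, thresholdMean_eq_sum_ite_div]
  rw [hBFDR_eq, hBFDR_eq]
  exact integral_mono (integrable_thresholdMean hmeas hfdr _ t)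
    (integrable_thresholdMean hmeas hfdr _ t')
    fun x => thresholdMean_mono (fun i _ => (hfdr i x).1) htt'
end

section
/- Given ordered posterior null probabilities fdr₍₁₎ ≤ fdr₍₂₎ ≤ ... ≤ fdr₍p₎ in [0,1] and α ∈ (0,1) with fdr₍₁₎ ≤ α, let J = max{j : (1/j)Σᵢ₌₁ʲ fdr₍ᵢ₎ ≤ α}. Then rejecting the J hypotheses with smallest fdr scores yields a posterior expected false discovery proportion E[V/R | X] = (1/J)Σᵢ₌₁ᴶ fdr₍ᵢ₎ ≤ α, and J is the maximum number of rejections among all subsets S with (1/|S|)Σᵢ∈S fdrᵢ ≤ α. -/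
/-!
Since the scores are sorted, the `k` smallest indices minimise the total score among all
rejection sets of size `k`. So if some `S` has average score at most `α`, then so does the
prefix of length `#S`, and the step-up search over prefix lengths finds a `J ≥ #S`.
-/

open Finset

theorem Monotone.sum_range_card_le_sum {M : Type*} [AddCommMonoid M] [PartialOrder M]
    [IsOrderedAddMonoid M] {f : ℕ → M} (hf : Monotone f) (S : Finset ℕ) :
    ∑ i ∈ range #S, f i ≤ ∑ i ∈ S, f i := by
  induction S using Finset.induction_on_max with
  | empty => simp
  | insert a s hlt ih =>
    have ha : a ∉ s := fun h => lt_irrefl a (hlt a h)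
    have hcard : #s ≤ a := by
      simpa using card_le_card (fun x hx => mem_range.mpr (hlt x hx) : s ⊆ range a)
    rw [card_insert_of_notMem ha, sum_range_succ, sum_insert ha, add_comm (f a)]
    exact add_le_add ih (hf hcard)

theorem card_le_findGreatest_of_sum_le {f : ℕ → ℝ} (hf : Monotone f) {α : ℝ} {p : ℕ}
    {S : Finset ℕ} (hS : S ⊆ range p) (hsum : ∑ i ∈ S, f i ≤ α * #S) :
    #S ≤ Nat.findGreatest (fun j => ∑ i ∈ range j, f i ≤ α * j) p :=
  Nat.le_findGreatest (by simpa using card_le_card hS) ((hf.sum_range_card_le_sum S).trans hsum)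

theorem stepup_rule_optimal_general
    (p : ℕ) (hp : 1 ≤ p) (α : ℝ)
    (fdr : ℕ → ℝ) (hmono : Monotone fdr)
    (hfirst : fdr 0 ≤ α)
    (J : ℕ)
    (hJ : J = Nat.findGreatest
      (fun j => (∑ i ∈ Finset.range j, fdr i) ≤ α * j) p) :
    1 ≤ J
    ∧ (1 / (J : ℝ)) * (∑ i ∈ Finset.range J, fdr i) ≤ α
    ∧ ∀ S : Finset ℕ, S ⊆ Finset.range p → S.Nonempty →
        (1 / (S.card : ℝ)) * (∑ i ∈ S, fdr i) ≤ α → S.card ≤ J := by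
  have hrejectOne : ∑ i ∈ range 1, fdr i ≤ α * (1 : ℕ) := by simpa using hfirst
  have hJpos : 1 ≤ J := by rw [hJ]; exact Nat.le_findGreatest hp hrejectOne
  have hJsum : ∑ i ∈ range J, fdr i ≤ α * J := by
    rw [hJ]
    exact Nat.findGreatest_spec (P := fun j => ∑ i ∈ range j, fdr i ≤ α * j) hp hrejectOne
  refine ⟨hJpos, ?_, fun S hSp hSne hSavg => ?_⟩
  · rw [one_div_mul_eq_div, div_le_iff₀ (by exact_mod_cast hJpos)]
    exact hJsum
  · rw [one_div_mul_eq_div, div_le_iff₀ (by simpa using hSne.card_pos)] at hSavg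
    exact hJ ▸ card_le_findGreatest_of_sum_le hmono hSp hSavg

/-- The step-up rule over ordered local fdr scores.  Given nondecreasing
posterior null probabilities `fdr₍₁₎ ≤ ⋯ ≤ fdr₍p₎` in `[0,1]` (indexed here by
`0,…,p-1`), `α ∈ (0,1)` with `fdr₍₁₎ ≤ α`, let
`J = max{j ≤ p : Σ_{i<j} fdrᵢ ≤ α j}`.  Then `J ≥ 1`, rejecting the `J`
hypotheses with the smallest scores gives posterior expected false discovery
proportion `(1/J) Σ_{i<J} fdrᵢ ≤ α`, and `J` is the maximal size of any
rejection set `S ⊆ {0,…,p-1}` whose average fdr score is at most `α`. -/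
theorem stepup_rule_optimal
    (p : ℕ) (hp : 1 ≤ p) (α : ℝ) (hα : 0 < α) (hα1 : α < 1)
    (fdr : ℕ → ℝ) (hmono : Monotone fdr)
    (hbound : ∀ i, i < p → fdr i ∈ Set.Icc (0:ℝ) 1)
    (hfirst : fdr 0 ≤ α)
    (J : ℕ)
    (hJ : J = Nat.findGreatest
      (fun j => (∑ i ∈ Finset.range j, fdr i) ≤ α * j) p) :
    1 ≤ J
    ∧ (1 / (J : ℝ)) * (∑ i ∈ Finset.range J, fdr i) ≤ α
    ∧ ∀ S : Finset ℕ, S ⊆ Finset.range p → S.Nonempty →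
        (1 / (S.card : ℝ)) * (∑ i ∈ S, fdr i) ≤ α → S.card ≤ J :=
  stepup_rule_optimal_general p hp α fdr hmono hfirst J hJ
end
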